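/- Identity lemma for indexed MALL: for every MALL(I) formula A of domain J, the sequent ⊢_J A, A^⊥ is provable in MALL(I) (the sequent calculus with indexed axioms ⊢_J 1_J and ⊢_∅ Γ, ⊤_∅, and the indexed multiplicative and additive rules), by induction on A. -/

import Mathlib

namespace IndexedMALL

variable {I : Type*}

/-- Formulas of Bucciarelli–Ehrhard indexed multiplicative–additive linear
logic `MALL(I)`, built from indexed constants by the binary connectives. -/
inductive Formula (I : Type*) where
  | one (J : Set I)
  | bot (J : Set I)
  | zero
  | top
  | tensor (A B : Formula I)
  | par (A B : Formula I)
  | oplus (A B : Formula I)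
  | with_ (A B : Formula I)

/-- The domain `d(A) ⊆ I` of a `MALL(I)` formula. -/
def dom : Formula I → Set I
  | .one J => J
  | .bot J => J
  | .zero => ∅
  | .top => ∅
  | .tensor A B => dom A
  | .par A B => dom A
  | .oplus A B => dom A ∪ dom B
  | .with_ A B => dom A ∪ dom B

/-- Well-formedness: multiplicative connectives join formulas of the same
domain, additive connectives join formulas of disjoint domains. -/
def WF : Formula I → Prop
  | .one _ => True
  | .bot _ => True
  | .zero => True
  | .top => True
  | .tensor A B => WF A ∧ WF B ∧ dom A = dom B
  | .par A B => WF A ∧ WF B ∧ dom A = dom B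
  | .oplus A B => WF A ∧ WF B ∧ Disjoint (dom A) (dom B)
  | .with_ A B => WF A ∧ WF B ∧ Disjoint (dom A) (dom B)

/-- Linear negation by De Morgan duality, preserving domains. -/
def neg : Formula I → Formula I
  | .one J => .bot J
  | .bot J => .one J
  | .zero => .top
  | .top => .zero
  | .tensor A B => .par (neg A) (neg B)
  | .par A B => .tensor (neg A) (neg B)
  | .oplus A B => .with_ (neg A) (neg B)
  | .with_ A B => .oplus (neg A) (neg B)

/-- Restriction `A|_K` of a `MALL(I)` formula by a set of indices `K`. -/
def restrict : Formula I → Set I → Formula I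
  | .one J, K => .one (J ∩ K)
  | .bot J, K => .bot (J ∩ K)
  | .zero, _ => .zero
  | .top, _ => .top
  | .tensor A B, K => .tensor (restrict A K) (restrict B K)
  | .par A B, K => .par (restrict A K) (restrict B K)
  | .oplus A B, K => .oplus (restrict A K) (restrict B K)
  | .with_ A B, K => .with_ (restrict A K) (restrict B K)

end IndexedMALL

namespace IndexedMALL

/-- Provability of `MALL(I)` sequents `⊢_J Γ`. -/
inductive Prov {I : Type*} : Set I → List (Formula I) → Prop
  | one (J : Set I) : Prov J [.one J]
  | top (Γ : List (Formula I)) : Prov ∅ (Γ ++ [.top])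
  | bot {J Γ} : Prov J Γ → Prov J (Γ ++ [.bot J])
  | tensor {J : Set I} {Γ₁ Γ₂ A B} :
      Prov J (Γ₁ ++ [A]) → Prov J (Γ₂ ++ [B]) →
      Prov J (Γ₁ ++ Γ₂ ++ [.tensor A B])
  | par {J : Set I} {Γ A B} :
      Prov J (Γ ++ [A, B]) → Prov J (Γ ++ [.par A B])
  | with_ {J₁ J₂ : Set I} {Γ A₁ A₂} (h : Disjoint J₁ J₂)
      (hA₁ : dom A₁ = J₁) (hA₂ : dom A₂ = J₂) :
      Prov J₁ (Γ.map (fun A => restrict A J₁) ++ [A₁]) →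
      Prov J₂ (Γ.map (fun A => restrict A J₂) ++ [A₂]) →
      Prov (J₁ ∪ J₂) (Γ ++ [.with_ A₁ A₂])
  | oplus₁ {J : Set I} {Γ A₁ A₂} (h : dom A₂ = ∅) :
      Prov J (Γ ++ [A₁]) → Prov J (Γ ++ [.oplus A₁ A₂])
  | oplus₂ {J : Set I} {Γ A₁ A₂} (h : dom A₁ = ∅) :
      Prov J (Γ ++ [A₂]) → Prov J (Γ ++ [.oplus A₁ A₂])
  | exch {J : Set I} {Γ Γ'} : Γ.Perm Γ' → Prov J Γ → Prov J Γ'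

end IndexedMALL

open IndexedMALL

namespace IndexedMALL

variable {I : Type*}

theorem dom_neg (A : Formula I) : dom (neg A) = dom A := by
  induction A <;> simp [neg, dom, *]

theorem WF.neg {A : Formula I} (h : WF A) : WF (neg A) := by
  induction A <;> simp_all [IndexedMALL.neg, WF, dom_neg]

theorem dom_restrict (A : Formula I) (K : Set I) :
    dom (restrict A K) = dom A ∩ K := by
  induction A <;> simp [restrict, dom, Set.union_inter_distrib_right, *]

theorem restrict_eq_self_of_dom_subset {A : Formula I} {K : Set I} (h : WF A)
    (hK : dom A ⊆ K) : restrict A K = A := by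
  induction A with
  | tensor A B ihA ihB | par A B ihA ihB =>
    obtain ⟨hA, hB, hAB⟩ := h
    simp [restrict, ihA hA hK, ihB hB (hAB ▸ hK)]
  | oplus A B ihA ihB | with_ A B ihA ihB =>
    obtain ⟨hA, hB, -⟩ := h
    obtain ⟨hKA, hKB⟩ := Set.union_subset_iff.mp hK
    simp [restrict, ihA hA hKA, ihB hB hKB]
  | one J | bot J => simp [restrict, Set.inter_eq_left.mpr (show J ⊆ K from hK)]
  | zero | top => rfl

theorem Prov.swap {J : Set I} {A B : Formula I} (h : Prov J [A, B]) : Prov J [B, A] :=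
  Prov.exch (List.Perm.swap B A []) h

theorem Prov.tensor_par {J : Set I} {A B C D : Formula I}
    (hAC : Prov J [A, C]) (hBD : Prov J [B, D]) :
    Prov J [.tensor A B, .par C D] := by
  have hCDAB : Prov J ([C, D] ++ [.tensor A B]) :=
    Prov.tensor (Γ₁ := [C]) (Γ₂ := [D]) hAC.swap hBD.swap
  exact Prov.par (Prov.exch List.perm_append_comm hCDAB)

/-- Restricted to either premise's domain, `A ⊕ B` keeps one summand intact while the other
gets empty domain, so each premise of `&` follows by a `⊕` rule. -/
theorem Prov.oplus_with {J₁ J₂ : Set I} {A B C D : Formula I} (hJ : Disjoint J₁ J₂)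
    (hA : WF A) (hB : WF B) (hdA : dom A = J₁) (hdB : dom B = J₂)
    (hdC : dom C = J₁) (hdD : dom D = J₂)
    (hAC : Prov J₁ [A, C]) (hBD : Prov J₂ [B, D]) :
    Prov (J₁ ∪ J₂) [.oplus A B, .with_ C D] := by
  have hA₁ : restrict A J₁ = A := restrict_eq_self_of_dom_subset hA hdA.le
  have hB₂ : restrict B J₂ = B := restrict_eq_self_of_dom_subset hB hdB.le
  have hB₁ : dom (restrict B J₁) = ∅ := by
    rw [dom_restrict, hdB]; exact Set.disjoint_iff_inter_eq_empty.mp hJ.symm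
  have hA₂ : dom (restrict A J₂) = ∅ := by
    rw [dom_restrict, hdA]; exact Set.disjoint_iff_inter_eq_empty.mp hJ
  have h₁ : Prov J₁ [.oplus (restrict A J₁) (restrict B J₁), C] := by
    rw [hA₁]; exact (Prov.oplus₁ (Γ := [C]) hB₁ hAC.swap).swap
  have h₂ : Prov J₂ [.oplus (restrict A J₂) (restrict B J₂), D] := by
    rw [hB₂]; exact (Prov.oplus₂ (Γ := [D]) hA₂ hBD.swap).swap
  exact Prov.with_ (Γ := [.oplus A B]) hJ hdC hdD h₁ h₂

end IndexedMALL

theorem identity_lemma {I : Type*} (A : Formula I) (J : Set I)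
    (hA : WF A) (hdom : dom A = J) :
    Prov J [A, neg A] := by
  subst hdom
  induction A with
  | one J => exact Prov.bot (Γ := [_]) (Prov.one J)
  | bot J => exact (Prov.bot (Γ := [_]) (Prov.one J)).swap
  | zero => exact Prov.top [.zero]
  | top => exact (Prov.top [.zero]).swap
  | tensor A B ihA ihB =>
    obtain ⟨hA, hB, hAB⟩ := hA
    exact Prov.tensor_par (ihA hA) (hAB ▸ ihB hB)
  | par A B ihA ihB =>
    obtain ⟨hA, hB, hAB⟩ := hA
    exact (Prov.tensor_par (ihA hA).swap (hAB ▸ ihB hB).swap).swap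
  | oplus A B ihA ihB =>
    obtain ⟨hA, hB, hAB⟩ := hA
    exact Prov.oplus_with hAB hA hB rfl rfl (dom_neg A) (dom_neg B) (ihA hA) (ihB hB)
  | with_ A B ihA ihB =>
    obtain ⟨hA, hB, hAB⟩ := hA
    exact (Prov.oplus_with hAB hA.neg hB.neg (dom_neg A) (dom_neg B) rfl rfl
      (ihA hA).swap (ihB hB).swap).swap
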